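/- Let n ≥ 11 and 3 < d ≤ n−1 with n − d odd. Then every maximal unrefinable partition of T_n − d has largest part equal to 2n − 4. -/
import Mathlib

/-- The n-th triangular number. -/
def T (n : ℕ) : ℕ := n * (n + 1) / 2

/-- A partition of `N` into distinct parts, represented as a finite set of
positive integers with at least two elements summing to `N`. -/
def DistinctPartition (N : ℕ) (S : Finset ℕ) : Prop :=
  (∀ x ∈ S, 0 < x) ∧ 2 ≤ S.card ∧ S.sum id = N

/-- The missing parts: integers in `{1, …, λ_t}` not appearing in the partition. -/
def Missing (S : Finset ℕ) : Finset ℕ := Finset.Icc 1 (S.sup id) \ S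

/-- No part is the sum of two distinct missing parts. -/
def Unrefinable (S : Finset ℕ) : Prop :=
  ∀ a ∈ Missing S, ∀ b ∈ Missing S, a ≠ b → a + b ∉ S

def UnrefinablePartition (N : ℕ) (S : Finset ℕ) : Prop :=
  DistinctPartition N S ∧ Unrefinable S

/-- A maximal unrefinable partition: its largest part is maximal among the
largest parts of all unrefinable partitions of `N`. -/
def MaximalUnrefinable (N : ℕ) (S : Finset ℕ) : Prop :=
  UnrefinablePartition N S ∧
    ∀ S' : Finset ℕ, UnrefinablePartition N S' → S'.sup id ≤ S.sup id

lemma two_T (n : ℕ) : 2 * T n = n * (n + 1) := by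
  have h : 2 ∣ n * (n + 1) := (Nat.even_mul_succ_self n).two_dvd
  exact Nat.mul_div_cancel' h

lemma T_mono {a b : ℕ} (h : a ≤ b) : T a ≤ T b := by
  unfold T
  exact Nat.div_le_div_right (Nat.mul_le_mul h (by omega))

lemma T_succ (k : ℕ) : T (k + 1) = T k + (k + 1) := by
  have h3 : 2 * T (k + 1) = 2 * T k + (2 * k + 2) := by rw [two_T, two_T]; ring
  omega

lemma T_add_two (k : ℕ) : T (k + 2) = T k + (2 * k + 3) := by
  have h3 : 2 * T (k + 2) = 2 * T k + (4 * k + 6) := by rw [two_T, two_T]; ring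
  omega

lemma sum_Icc_one (k : ℕ) : ∑ x ∈ Finset.Icc 1 k, x = T k := by
  induction k with
  | zero => simp [T]
  | succ n ih =>
      rw [Finset.sum_Icc_succ_top (by omega), ih, T_succ]

lemma sum_Ioc_id (a c : ℕ) (h : a ≤ c) : ∑ x ∈ Finset.Ioc a c, x = T c - T a := by
  have h1 : (∑ x ∈ Finset.Ioc 0 a, x) + ∑ x ∈ Finset.Ioc a c, x
      = ∑ x ∈ Finset.Ioc 0 c, x := Finset.sum_Ioc_consecutive (fun x => x) (Nat.zero_le a) h
  have h2 : ∑ x ∈ Finset.Ioc 0 a, x = T a := by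
    rw [← Finset.Icc_add_one_left_eq_Ioc]; exact sum_Icc_one a
  have h3 : ∑ x ∈ Finset.Ioc 0 c, x = T c := by
    rw [← Finset.Icc_add_one_left_eq_Ioc]; exact sum_Icc_one c
  omega

/-- Upper bound: any unrefinable partition of `T n - d` (with `3 < d ≤ n-1`)
has largest part at most `2n - 4`. -/
lemma upper (n d : ℕ) (hn : 11 ≤ n) (hd1 : 3 < d) (hd2 : d ≤ n - 1)
    (S : Finset ℕ) (hS : UnrefinablePartition (T n - d) S) :
    S.sup id ≤ 2 * n - 4 := by
  by_contra hm
  push_neg at hm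
  obtain ⟨⟨hpos, hcard, hsum⟩, hunref⟩ := hS
  set m := S.sup id with hmdef
  have hne : S.Nonempty := Finset.card_pos.mp (by omega)
  obtain ⟨a, ha, ham⟩ := Finset.exists_mem_eq_sup S hne id
  have hmS : m ∈ S := by rw [hmdef, ham]; exact ha
  have hsub : ∀ x ∈ S, x ≤ m := fun x hx => Finset.le_sup (f := id) hx
  set h := (m - 1) / 2 with hh
  have hmlb : 2 * n - 3 ≤ m := by omega
  have hkey : ∀ x ∈ Finset.Icc 1 h,
      (if x ∈ S then x else m - x) ∈ S ∧ x ≤ (if x ∈ S then x else m - x) := by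
    intro x hx
    simp only [Finset.mem_Icc] at hx
    by_cases hxS : x ∈ S
    · simp [hxS]
    · simp only [if_neg hxS]
      refine ⟨?_, by omega⟩
      by_contra hmx
      have hx1 : x ∈ Missing S := by
        simp only [Missing, Finset.mem_sdiff, Finset.mem_Icc, ← hmdef]
        exact ⟨⟨hx.1, by omega⟩, hxS⟩
      have hx2 : m - x ∈ Missing S := by
        simp only [Missing, Finset.mem_sdiff, Finset.mem_Icc, ← hmdef]
        exact ⟨⟨by omega, by omega⟩, hmx⟩
      have hne' : x ≠ m - x := by omega
      have hcontra := hunref _ hx1 _ hx2 hne'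
      have hxm : x + (m - x) = m := by omega
      rw [hxm] at hcontra
      exact hcontra hmS
  set f : ℕ → ℕ := fun x => if x ∈ S then x else m - x with hf
  have hinj : ∀ x ∈ Finset.Icc 1 h, ∀ y ∈ Finset.Icc 1 h, f x = f y → x = y := by
    intro x hx y hy hxy
    simp only [Finset.mem_Icc] at hx hy
    by_cases hxS : x ∈ S <;> by_cases hyS : y ∈ S <;>
      simp only [hf, if_pos, if_neg, hxS, hyS, if_true, if_false] at hxy <;> omega
  have hmnotin : m ∉ (Finset.Icc 1 h).image f := by
    intro hmem
    obtain ⟨x, hx, hfx⟩ := Finset.mem_image.mp hmem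
    simp only [Finset.mem_Icc] at hx
    by_cases hxS : x ∈ S <;> simp only [hf, hxS, if_true, if_false] at hfx <;> omega
  have himgsub : insert m ((Finset.Icc 1 h).image f) ⊆ S := by
    intro y hy
    rcases Finset.mem_insert.mp hy with rfl | hy
    · exact hmS
    · obtain ⟨x, hx, rfl⟩ := Finset.mem_image.mp hy
      exact (hkey x hx).1
  have hsum1 : m + ∑ x ∈ Finset.Icc 1 h, f x ≤ S.sum id := by
    calc m + ∑ x ∈ Finset.Icc 1 h, f x
        = ∑ y ∈ insert m ((Finset.Icc 1 h).image f), y := by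
          rw [Finset.sum_insert hmnotin, Finset.sum_image hinj]
      _ ≤ ∑ y ∈ S, y := Finset.sum_le_sum_of_subset himgsub
      _ = S.sum id := rfl
  have hsum2 : (∑ x ∈ Finset.Icc 1 h, x) ≤ ∑ x ∈ Finset.Icc 1 h, f x :=
    Finset.sum_le_sum (fun x hx => (hkey x hx).2)
  have hTh : ∑ x ∈ Finset.Icc 1 h, x = T h := sum_Icc_one h
  have hmono : T (n - 2) ≤ T h := T_mono (by omega)
  have hTn : T n = T (n - 2) + (2 * (n - 2) + 3) := by
    have := T_add_two (n - 2); rw [show n - 2 + 2 = n by omega] at this; exact this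
  omega

/-- Construction: an unrefinable partition of `T b + b + 2 s` with largest part `2 b`. -/
lemma construction (b s : ℕ) (hb : 9 ≤ b) (hs1 : 1 ≤ s) (hs2 : 2 * s + 1 ≤ b) :
    ∃ S₀ : Finset ℕ, UnrefinablePartition (T b + b + 2 * s) S₀ ∧ S₀.sup id = 2 * b := by
  set M₀ : Finset ℕ :=
    insert (b - s) (insert b ((Finset.Ioc b (2 * b - 1)).erase (b + s))) with hM₀
  set S₀ : Finset ℕ := Finset.Icc 1 (2 * b) \ M₀ with hS₀
  have hM : ∀ x, x ∈ M₀ ↔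
      (x = b - s ∨ x = b ∨ (b + 1 ≤ x ∧ x ≤ 2 * b - 1 ∧ x ≠ b + s)) := by
    intro x
    simp only [hM₀, Finset.mem_insert, Finset.mem_erase, Finset.mem_Ioc]
    omega
  have hSmem : ∀ x, x ∈ S₀ ↔ ((1 ≤ x ∧ x ≤ 2 * b) ∧
      ¬(x = b - s ∨ x = b ∨ (b + 1 ≤ x ∧ x ≤ 2 * b - 1 ∧ x ≠ b + s))) := by
    intro x
    simp only [hS₀, Finset.mem_sdiff, Finset.mem_Icc, hM]
  have h2b : 2 * b ∈ S₀ := by rw [hSmem]; omega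
  have hbs : b + s ∈ S₀ := by rw [hSmem]; omega
  have hsup : S₀.sup id = 2 * b := by
    apply le_antisymm
    · apply Finset.sup_le
      intro x hx
      rw [hSmem] at hx
      exact hx.1.2
    · exact Finset.le_sup (f := id) h2b
  have hMsub : M₀ ⊆ Finset.Icc 1 (2 * b) := by
    intro x hx; rw [hM] at hx; simp only [Finset.mem_Icc]; omega
  have hmiss : Missing S₀ = M₀ := by
    rw [Missing, hsup, hS₀]
    exact Finset.sdiff_sdiff_eq_self hMsub
  -- the sum
  have hIoc : ∑ x ∈ Finset.Ioc b (2 * b - 1), x = T (2 * b - 1) - T b :=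
    sum_Ioc_id b (2 * b - 1) (by omega)
  have hbsIoc : b + s ∈ Finset.Ioc b (2 * b - 1) := by
    simp only [Finset.mem_Ioc]; omega
  have hE : (∑ x ∈ (Finset.Ioc b (2 * b - 1)).erase (b + s), x) + (b + s)
      = T (2 * b - 1) - T b := by
    rw [Finset.sum_erase_add _ _ hbsIoc, hIoc]
  have hbnot : b ∉ (Finset.Ioc b (2 * b - 1)).erase (b + s) := by
    simp only [Finset.mem_erase, Finset.mem_Ioc]; omega
  have hbsnot : b - s ∉ insert b ((Finset.Ioc b (2 * b - 1)).erase (b + s)) := by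
    simp only [Finset.mem_insert, Finset.mem_erase, Finset.mem_Ioc]; omega
  have hMsum : ∑ x ∈ M₀, x
      = (b - s) + (b + ∑ x ∈ (Finset.Ioc b (2 * b - 1)).erase (b + s), x) := by
    rw [hM₀, Finset.sum_insert hbsnot, Finset.sum_insert hbnot]
  have hsdiff : (∑ x ∈ S₀, x) + ∑ x ∈ M₀, x = ∑ x ∈ Finset.Icc 1 (2 * b), x :=
    Finset.sum_sdiff hMsub
  have hIcc2b : ∑ x ∈ Finset.Icc 1 (2 * b), x = T (2 * b) := sum_Icc_one (2 * b)
  have hT1 : T (2 * b) = T (2 * b - 1) + 2 * b := by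
    have := T_succ (2 * b - 1); rw [show 2 * b - 1 + 1 = 2 * b by omega] at this; exact this
  have hT2 : T b ≤ T (2 * b - 1) := T_mono (by omega)
  have hT3 : T b + (b + s) ≤ T (2 * b - 1) := by
    have := T_add_two b
    have h4 : T (b + 2) ≤ T (2 * b - 1) := T_mono (by omega)
    omega
  have hS₀sum : ∑ x ∈ S₀, x = T b + b + 2 * s := by omega
  refine ⟨S₀, ⟨⟨?_, ?_, ?_⟩, ?_⟩, hsup⟩
  · intro x hx; rw [hSmem] at hx; omega
  · have := Finset.one_lt_card.mpr ⟨2 * b, h2b, b + s, hbs, by omega⟩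
    omega
  · exact hS₀sum
  · intro a ha c hc hac
    rw [hmiss, hM] at ha hc
    intro hmem
    rw [hSmem] at hmem
    omega

theorem max_part_n_sub_d_odd (n d : ℕ) (hn : 11 ≤ n) (hd1 : 3 < d) (hd2 : d ≤ n - 1)
    (hpar : Odd (n - d)) (S : Finset ℕ) (h : MaximalUnrefinable (T n - d) S) :
    S.sup id = 2 * n - 4 := by
  obtain ⟨c, hc⟩ := hpar
  have hNval : T n - d = T (n - 2) + (n - 2) + 2 * (c + 1) := by
    have h1 : T n = T (n - 2) + (2 * (n - 2) + 3) := by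
      have := T_add_two (n - 2); rw [show n - 2 + 2 = n by omega] at this; exact this
    omega
  obtain ⟨S₀, hS₀unref, hS₀sup⟩ :=
    construction (n - 2) (c + 1) (by omega) (by omega) (by omega)
  have h1 : S.sup id ≤ 2 * n - 4 := upper n d hn hd1 hd2 S h.1
  have h2 : S₀.sup id ≤ S.sup id := h.2 _ (by rw [hNval]; exact hS₀unref)
  rw [hS₀sup] at h2
  omega
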